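/- arXiv:2601.04431 — 6 statements merged into one kernel-verified Lean document; each statement's English description precedes it below -/
import Mathlib

section
/- Let f : ℝ → ℝ be continuous with f(0) = 0 and |f(t)| ≤ α|t| + β for some positive reals α, β. Then f is strongly continuous: for every Hilbert space H and every net (x_i) of bounded self-adjoint operators on H converging in the strong operator topology to a self-adjoint operator x, with uniformly bounded norms, the net (f(x_i)) converges strongly to f(x) (where f is applied via continuous functional calculus). -/
/-!
On the interval `[-R, R]` containing all the spectra, approximate `f` uniformly within `δ` by a
real polynomial `q` (Weierstrass). Since the continuous functional calculus is isometric,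
`‖cfc f a - q(a)‖ ≤ δ` for every self-adjoint `a` with `‖a‖ ≤ R`. Polynomials in the `x i`
converge strongly because multiplication is jointly strongly continuous on norm-bounded sets,
and a strong limit survives uniform perturbations of size `δ`.
-/

open Filter Topology

namespace ContinuousLinearMap

variable {𝕜 E : Type*} [NontriviallyNormedField 𝕜] [SeminormedAddCommGroup E] [NormedSpace 𝕜 E]
  {ι : Type*} {l : Filter ι}

theorem tendsto_mul_apply_of_norm_le {a b : ι → E →L[𝕜] E} {A B : E →L[𝕜] E} {C : ℝ}
    (ha : ∀ w, Tendsto (fun i => a i w) l (𝓝 (A w)))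
    (hb : ∀ w, Tendsto (fun i => b i w) l (𝓝 (B w)))
    (hC : ∀ i, ‖a i‖ ≤ C) (w : E) :
    Tendsto (fun i => (a i * b i) w) l (𝓝 ((A * B) w)) := by
  rw [tendsto_iff_norm_sub_tendsto_zero]
  have hlim : Tendsto (fun i => C * ‖b i w - B w‖ + ‖a i (B w) - A (B w)‖) l (𝓝 0) := by
    simpa using ((tendsto_iff_norm_sub_tendsto_zero.1 (hb w)).const_mul C).add
      (tendsto_iff_norm_sub_tendsto_zero.1 (ha (B w)))
  refine squeeze_zero (fun _ => norm_nonneg _) (fun i => ?_) hlim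
  calc ‖(a i * b i) w - (A * B) w‖
      = ‖a i (b i w - B w) + (a i (B w) - A (B w))‖ := by
        rw [mul_apply_eq_comp, mul_apply_eq_comp, map_sub, sub_add_sub_cancel]
    _ ≤ ‖a i‖ * ‖b i w - B w‖ + ‖a i (B w) - A (B w)‖ :=
        (norm_add_le _ _).trans (add_le_add_left ((a i).le_opNorm _) _)
    _ ≤ C * ‖b i w - B w‖ + ‖a i (B w) - A (B w)‖ := by gcongr; exact hC i

theorem tendsto_pow_apply_of_norm_le {a : ι → E →L[𝕜] E} {A : E →L[𝕜] E} {C : ℝ}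
    (ha : ∀ w, Tendsto (fun i => a i w) l (𝓝 (A w))) (hC : ∀ i, ‖a i‖ ≤ C) (n : ℕ) (w : E) :
    Tendsto (fun i => (a i ^ n) w) l (𝓝 ((A ^ n) w)) := by
  induction n generalizing w with
  | zero => simpa using tendsto_const_nhds
  | succ n ih =>
    simp only [pow_succ']
    exact tendsto_mul_apply_of_norm_le ha ih hC w

variable {S : Type*} [CommSemiring S] [Module S E] [SMulCommClass 𝕜 S E] [SMul S 𝕜]
  [IsScalarTower S 𝕜 E] [ContinuousConstSMul S E]

theorem tendsto_aeval_apply_of_norm_le {a : ι → E →L[𝕜] E} {A : E →L[𝕜] E} {C : ℝ}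
    (ha : ∀ w, Tendsto (fun i => a i w) l (𝓝 (A w))) (hC : ∀ i, ‖a i‖ ≤ C)
    (q : Polynomial S) (w : E) :
    Tendsto (fun i => Polynomial.aeval (a i) q w) l (𝓝 (Polynomial.aeval A q w)) := by
  simp only [Polynomial.aeval_eq_sum_range, sum_apply, smul_apply]
  exact tendsto_finsetSum _ fun n _ => (tendsto_pow_apply_of_norm_le ha hC n w).const_smul _

theorem tendsto_apply_of_forall_norm_sub_le {F : ι → E →L[𝕜] E} {F₀ : E →L[𝕜] E}
    (h : ∀ δ > 0, ∃ (G : ι → E →L[𝕜] E) (G₀ : E →L[𝕜] E),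
      (∀ w, Tendsto (fun i => G i w) l (𝓝 (G₀ w))) ∧ (∀ i, ‖F i - G i‖ ≤ δ) ∧ ‖F₀ - G₀‖ ≤ δ)
    (v : E) : Tendsto (fun i => F i v) l (𝓝 (F₀ v)) := by
  rw [Metric.tendsto_nhds]
  intro ε hε
  obtain ⟨G, G₀, hG, hFG, hFG₀⟩ := h (ε / 3 / (‖v‖ + 1)) (by positivity)
  have hclose : ∀ K : E →L[𝕜] E, ‖K‖ ≤ ε / 3 / (‖v‖ + 1) → ‖K v‖ < ε / 3 := fun K hK =>
    calc ‖K v‖ ≤ ε / 3 / (‖v‖ + 1) * ‖v‖ := (K.le_opNorm v).trans (by gcongr)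
      _ < ε / 3 := by
        rw [div_mul_eq_mul_div, div_lt_iff₀ (by positivity)]
        nlinarith [norm_nonneg v]
  filter_upwards [Metric.tendsto_nhds.mp (hG v) (ε / 3) (by positivity)] with i hi
  calc dist (F i v) (F₀ v) ≤ dist (F i v) (G i v) + dist (G i v) (G₀ v) + dist (G₀ v) (F₀ v) :=
        dist_triangle4 _ _ _ _
    _ < ε / 3 + ε / 3 + ε / 3 := by
        gcongr
        · simpa [dist_eq_norm] using hclose _ (hFG i)
        · rw [dist_comm]; simpa [dist_eq_norm] using hclose _ hFG₀
    _ = ε := by ring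

end ContinuousLinearMap

section
variable {A : Type*} [NormedRing A] [StarRing A] [NormedAlgebra ℝ A]
  [IsometricContinuousFunctionalCalculus ℝ A IsSelfAdjoint]

theorem IsSelfAdjoint.spectrum_subset_Icc {a : A} (ha : IsSelfAdjoint a) :
    spectrum ℝ a ⊆ Set.Icc (-‖a‖) ‖a‖ := fun t ht => by
  have := norm_apply_le_norm_cfc (fun t : ℝ => t) a ht
  rw [cfc_id' ℝ a, Real.norm_eq_abs] at this
  exact abs_le.mp this

theorem norm_cfc_sub_aeval_le {f : ℝ → ℝ} {q : Polynomial ℝ} {R δ : ℝ} (hδ : 0 ≤ δ)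
    (hq : ∀ t ∈ Set.Icc (-R) R, |q.eval t - f t| < δ) {a : A} (ha : IsSelfAdjoint a)
    (hf : ContinuousOn f (spectrum ℝ a)) (haR : ‖a‖ ≤ R) :
    ‖cfc f a - Polynomial.aeval a q‖ ≤ δ := by
  rw [← cfc_polynomial q a, ← cfc_sub f q.eval a]
  refine norm_cfc_le hδ fun t ht => ?_
  have := ha.spectrum_subset_Icc ht
  rw [Real.norm_eq_abs, abs_sub_comm]
  exact (hq t ⟨by linarith [this.1], this.2.trans haR⟩).le
end

theorem strongly_continuous_of_linear_growth_general
    (f : ℝ → ℝ) (hf : Continuous f)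
    {H : Type*} [NormedAddCommGroup H] [InnerProductSpace ℂ H] [CompleteSpace H]
    {ι : Type*} (l : Filter ι)
    (x : ι → (H →L[ℂ] H)) (T : H →L[ℂ] H)
    (hx : ∀ i, IsSelfAdjoint (x i)) (hT : IsSelfAdjoint T)
    (hbdd : ∃ C : ℝ, ∀ i, ‖x i‖ ≤ C)
    (hsot : ∀ v : H, Tendsto (fun i => x i v) l (𝓝 (T v))) :
    ∀ v : H, Tendsto (fun i => cfc f (x i) v) l (𝓝 (cfc f T v)) := by
  obtain ⟨C, hC⟩ := hbdd
  set R := max C ‖T‖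
  refine ContinuousLinearMap.tendsto_apply_of_forall_norm_sub_le fun (δ : ℝ) hδ => ?_
  obtain ⟨q, hq⟩ := exists_polynomial_near_of_continuousOn (-R) R f hf.continuousOn δ hδ
  exact ⟨fun i => Polynomial.aeval (x i) q, Polynomial.aeval T q,
    ContinuousLinearMap.tendsto_aeval_apply_of_norm_le hsot hC q,
    fun i => norm_cfc_sub_aeval_le hδ.le hq (hx i) hf.continuousOn
      ((hC i).trans (le_max_left _ _)),
    norm_cfc_sub_aeval_le hδ.le hq hT hf.continuousOn (le_max_right _ _)⟩

/-- **Strong continuity of continuous functional calculus.**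
If `f : ℝ → ℝ` is continuous with `f 0 = 0` and `|f t| ≤ α * |t| + β` for some
positive reals `α, β`, then `f` is strongly continuous: for every complex Hilbert
space `H` and every net `(x i)` of bounded self-adjoint operators on `H`, uniformly
bounded in norm and converging in the strong operator topology to a self-adjoint
operator `T`, the net `(f (x i))` (given by the continuous functional calculus)
converges strongly to `f T`. -/
theorem strongly_continuous_of_linear_growth
    (f : ℝ → ℝ) (hf : Continuous f) (hf0 : f 0 = 0)
    (α β : ℝ) (hα : 0 < α) (hβ : 0 < β) (hgrowth : ∀ t : ℝ, |f t| ≤ α * |t| + β)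
    {H : Type*} [NormedAddCommGroup H] [InnerProductSpace ℂ H] [CompleteSpace H]
    {ι : Type*} (l : Filter ι) [l.NeBot]
    (x : ι → (H →L[ℂ] H)) (T : H →L[ℂ] H)
    (hx : ∀ i, IsSelfAdjoint (x i)) (hT : IsSelfAdjoint T)
    (hbdd : ∃ C : ℝ, ∀ i, ‖x i‖ ≤ C)
    (hsot : ∀ v : H, Tendsto (fun i => x i v) l (𝓝 (T v))) :
    ∀ v : H, Tendsto (fun i => cfc f (x i) v) l (𝓝 (cfc f T v)) :=
  strongly_continuous_of_linear_growth_general f hf l x T hx hT hbdd hsot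
end

section
/- Let A be a commutative unital C*-algebra isomorphic to C(X) with X a Stonean (compact, Hausdorff, extremally disconnected) space, and let a ∈ A be self-adjoint. For r ∈ ℝ, let X(a,r) be the interior of {x ∈ X : a(x) ≤ r}, and E_a(r) the (projection given by the) characteristic function of the clopen set X(a,r). Then a can be uniformly approximated by finite sums Σ_k r_k (E_a(r_{k+1}) − E_a(r_k)): for every ε > 0 there is a partition m = r₁ < ⋯ < r_{n+1} = M of the range of a with mesh < ε such that ‖a − Σ_{k=1}^n r_k (E_a(r_{k+1}) − E_a(r_k))‖ ≤ ε. -/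
/-!
With `χ_k` the indicator of `X(a, r_k)`, the approximating sum at `x` is `Σ_k r_k w_k` with
weights `w_k = χ_{k+1}(x) - χ_k(x) ≥ 0`. Once the partition starts strictly below and ends strictly
above the range of `Re a` (here `±(‖a‖ + 1)`), the weights telescope to `1`, and `w_k ≠ 0` forces
`r_k ≤ a(x) ≤ r_{k+1}`. So `a(x) - Σ_k r_k w_k = Σ_k (a(x) - r_k) w_k` is a convex combination of
numbers bounded by the mesh.
-/

open scoped Classical

theorem Fin.sum_succ_sub_castSucc {M : Type*} [AddCommGroup M] :
    ∀ {n : ℕ} (f : Fin (n + 1) → M), ∑ i : Fin n, (f i.succ - f i.castSucc) = f (Fin.last n) - f 0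
  | 0, f => by simp
  | n + 1, f => by
    rw [Fin.sum_univ_castSucc]
    simp only [Fin.succ_castSucc]
    rw [Fin.sum_succ_sub_castSucc (fun i => f i.castSucc)]
    simp only [Fin.castSucc_zero, Fin.succ_last]
    abel

theorem exists_partition_of_lt {lo hi ε : ℝ} (hlh : lo < hi) (hε : 0 < ε) :
    ∃ (n : ℕ) (r : Fin (n + 2) → ℝ), StrictMono r ∧ r 0 = lo ∧ r (Fin.last (n + 1)) = hi ∧
      ∀ k : Fin (n + 1), r k.succ - r k.castSucc < ε := by
  set n := ⌈(hi - lo) / ε⌉₊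
  set d := (hi - lo) / (n + 1)
  have hd : 0 < d := div_pos (sub_pos.2 hlh) n.cast_add_one_pos
  have hdε : d < ε := by
    rw [div_lt_iff₀ n.cast_add_one_pos, ← div_lt_iff₀' hε]
    exact (Nat.le_ceil _).trans_lt (lt_add_one _)
  refine ⟨n, fun k => lo + k * d, fun i j hij => ?_, by simp, ?_, fun k => ?_⟩
  · simpa [hd] using hij
  · simp only [Fin.val_last, Nat.cast_add, Nat.cast_one, d]
    field_simp
    ring
  · simpa [add_mul] using hdε

theorem abs_sub_sum_mul_sub_le {n : ℕ} {r e : Fin (n + 2) → ℝ} {t ε : ℝ} (he : Monotone e)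
    (he0 : e 0 = 0) (he1 : e (Fin.last (n + 1)) = 1)
    (hclose : ∀ k : Fin (n + 1), e k.castSucc < e k.succ → |t - r k.castSucc| ≤ ε) :
    |t - ∑ k : Fin (n + 1), r k.castSucc * (e k.succ - e k.castSucc)| ≤ ε := by
  have hw : ∀ k : Fin (n + 1), 0 ≤ e k.succ - e k.castSucc :=
    fun k => sub_nonneg.2 (he (Fin.castSucc_le_succ k))
  have hsum : ∑ k : Fin (n + 1), (e k.succ - e k.castSucc) = 1 := by
    rw [Fin.sum_succ_sub_castSucc, he0, he1, sub_zero]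
  calc |t - ∑ k : Fin (n + 1), r k.castSucc * (e k.succ - e k.castSucc)|
      = |∑ k : Fin (n + 1), (t - r k.castSucc) * (e k.succ - e k.castSucc)| := by
        simp only [sub_mul, Finset.sum_sub_distrib, ← Finset.mul_sum, hsum, mul_one]
    _ ≤ ∑ k : Fin (n + 1), |t - r k.castSucc| * (e k.succ - e k.castSucc) := by
        refine (Finset.abs_sum_le_sum_abs _ _).trans (Finset.sum_le_sum fun k _ => ?_)
        rw [abs_mul, abs_of_nonneg (hw k)]
    _ ≤ ∑ k : Fin (n + 1), ε * (e k.succ - e k.castSucc) := by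
        refine Finset.sum_le_sum fun k _ => ?_
        rcases (hw k).eq_or_lt with h | h
        · rw [← h, mul_zero, mul_zero]
        · exact mul_le_mul_of_nonneg_right (hclose k (sub_pos.1 h)) (hw k)
    _ = ε := by rw [← Finset.mul_sum, hsum, mul_one]

section Sublevel

variable {X : Type*} [TopologicalSpace X] {f : X → ℝ}

theorem monotone_interior_setOf_le : Monotone fun r => interior {y | f y ≤ r} :=
  fun _ _ hrs => interior_mono fun _ hy => le_trans hy hrs

theorem le_of_mem_interior_setOf_le {x : X} {r : ℝ} (hx : x ∈ interior {y | f y ≤ r}) :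
    f x ≤ r :=
  interior_subset (s := {y | f y ≤ r}) hx

theorem mem_interior_setOf_le_of_lt (hf : Continuous f) {x : X} {r : ℝ} (hx : f x < r) :
    x ∈ interior {y | f y ≤ r} :=
  interior_maximal (fun _ hy => le_of_lt hy) (isOpen_lt hf continuous_const) hx

theorem abs_sub_sum_mul_indicator_sub_le (hf : Continuous f) {n : ℕ} {r : Fin (n + 2) → ℝ}
    (hr : Monotone r) {ε : ℝ} (hmesh : ∀ k : Fin (n + 1), r k.succ - r k.castSucc ≤ ε) {x : X}
    (h0 : r 0 < f x) (hlast : f x < r (Fin.last (n + 1))) :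
    |f x - ∑ k : Fin (n + 1), r k.castSucc *
      ((interior {y | f y ≤ r k.succ}).indicator 1 x -
        (interior {y | f y ≤ r k.castSucc}).indicator 1 x)| ≤ ε := by
  refine abs_sub_sum_mul_sub_le
    (e := fun k => (interior {y | f y ≤ r k}).indicator (1 : X → ℝ) x)
    (fun i j hij => Set.indicator_le_indicator_of_subset (monotone_interior_setOf_le (hr hij))
      (fun _ => zero_le_one) x) ?_ ?_ fun k hk => ?_
  · exact Set.indicator_of_notMem (fun hx => h0.not_ge (le_of_mem_interior_setOf_le hx)) 1
  · exact Set.indicator_of_mem (mem_interior_setOf_le_of_lt hf hlast) 1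
  · simp only [Set.indicator_apply, Pi.one_apply] at hk
    split_ifs at hk <;> norm_num at hk
    rename_i hout hin
    have hlo : r k.castSucc ≤ f x := not_lt.1 fun hlt => hout (mem_interior_setOf_le_of_lt hf hlt)
    have hhi : f x ≤ r k.succ := le_of_mem_interior_setOf_le hin
    rw [abs_of_nonneg (sub_nonneg.2 hlo)]
    linarith [hmesh k]

end Sublevel

theorem stonean_spectral_approximation_general
    {X : Type*} [TopologicalSpace X] [CompactSpace X]
    (a : C(X, ℂ)) (ha : IsSelfAdjoint a)
    (E : ℝ → C(X, ℂ))
    (hE : ∀ r : ℝ, ∀ x : X,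
      E r x = if x ∈ interior {y : X | (a y).re ≤ r} then 1 else 0) :
    ∀ ε > (0 : ℝ), ∃ (n : ℕ) (r : Fin (n + 2) → ℝ),
      StrictMono r ∧
      (∀ x : X, r 0 ≤ (a x).re ∧ (a x).re ≤ r (Fin.last (n + 1))) ∧
      (∀ k : Fin (n + 1), r k.succ - r k.castSucc < ε) ∧
      ‖a - ∑ k : Fin (n + 1),
        (r k.castSucc : ℂ) • (E (r k.succ) - E (r k.castSucc))‖ ≤ ε := by
  intro ε hε
  obtain ⟨n, r, hr, hr0, hrlast, hmesh⟩ :=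
    exists_partition_of_lt (lo := -(‖a‖ + 1)) (hi := ‖a‖ + 1) (by linarith [norm_nonneg a]) hε
  have hbound : ∀ x, -(‖a‖ + 1) < (a x).re ∧ (a x).re < ‖a‖ + 1 := fun x =>
    abs_lt.1 <| ((Complex.abs_re_le_norm _).trans (a.norm_coe_le_norm x)).trans_lt (lt_add_one _)
  refine ⟨n, r, hr, fun x => ?_, hmesh, (ContinuousMap.norm_le _ hε.le).2 fun x => ?_⟩
  · rw [hr0, hrlast]
    exact ⟨(hbound x).1.le, (hbound x).2.le⟩
  have hreal : ((a x).re : ℂ) = a x := Complex.conj_eq_iff_re.1 congr($ha x)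
  have hEx : ∀ s, E s x = ((interior {y | (a y).re ≤ s}).indicator 1 x : ℝ) := fun s => by
    rw [hE, Set.indicator_apply]
    split_ifs <;> simp
  have key := abs_sub_sum_mul_indicator_sub_le (f := fun y => (a y).re) (x := x) (by fun_prop)
    hr.monotone (fun k => (hmesh k).le) (hr0 ▸ (hbound x).1) (hrlast ▸ (hbound x).2)
  rw [← Real.norm_eq_abs, ← Complex.norm_real] at key
  refine (le_of_eq ?_).trans key
  congr 1
  simp [hEx, hreal]

/-- **Uniform Riemann–Stieltjes approximation by spectral projections in `C(X)`,
`X` Stonean.**  Let `X` be a Stonean (compact Hausdorff extremally disconnected)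
space and `a ∈ C(X, ℂ)` self-adjoint (i.e. real-valued).  For `r : ℝ`, let
`X(a,r)` be the interior of `{x | a x ≤ r}` and `E_a(r)` the characteristic
function of the clopen set `X(a,r)` (a projection in `C(X)`).  Then `a` is
uniformly approximated by the finite sums `Σ_k r_k (E_a(r_{k+1}) − E_a(r_k))`:
for every `ε > 0` there is a partition `m = r₀ < ⋯ < r_{n+1} = M` of the range of
`a` with mesh `< ε` such that
`‖a − Σ_k r_k (E_a(r_{k+1}) − E_a(r_k))‖ ≤ ε`. -/
theorem stonean_spectral_approximation
    {X : Type*} [TopologicalSpace X] [CompactSpace X] [T2Space X]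
    [ExtremallyDisconnected X] [Nonempty X]
    (a : C(X, ℂ)) (ha : IsSelfAdjoint a)
    (E : ℝ → C(X, ℂ))
    (hE : ∀ r : ℝ, ∀ x : X,
      E r x = if x ∈ interior {y : X | (a y).re ≤ r} then 1 else 0) :
    ∀ ε > (0 : ℝ), ∃ (n : ℕ) (r : Fin (n + 2) → ℝ),
      StrictMono r ∧
      (∀ x : X, r 0 ≤ (a x).re ∧ (a x).re ≤ r (Fin.last (n + 1))) ∧
      (∀ k : Fin (n + 1), r k.succ - r k.castSucc < ε) ∧
      ‖a - ∑ k : Fin (n + 1),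
        (r k.castSucc : ℂ) • (E (r k.succ) - E (r k.castSucc))‖ ≤ ε :=
  stonean_spectral_approximation_general a ha E hE
end

section
/- Let X be a Stonean space, a ∈ C(X) real-valued, and for r ∈ ℝ let E_a(r) ∈ C(X) be the characteristic function of the interior of {x : a(x) ≤ r}. Then r ↦ E_a(r) is monotone increasing and order-continuous from above: for every r₀, the projection E_a(r₀) is the infimum in the projection lattice of C(X) of {E_a(r) : r > r₀}. -/
/-!
An idempotent `p ∈ C(X, ℝ)` takes only the values `0` and `1`, so it is the characteristic
function of the open set `{p = 1}`, and `p ≤ E r` just says `{p = 1} ⊆ interior {a ≤ r}`.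
If this holds for every `r > r₀`, then `{p = 1} ⊆ {a ≤ r₀}`, and being open, `{p = 1}` lies in
`interior {a ≤ r₀}`, i.e. `p ≤ E r₀`.
-/

namespace ContinuousMap

variable {X : Type*} [TopologicalSpace X]

lemma apply_eq_zero_or_eq_one_of_isIdempotentElem {p : C(X, ℝ)} (hp : IsIdempotentElem p)
    (x : X) : p x = 0 ∨ p x = 1 :=
  IsIdempotentElem.iff_eq_zero_or_one.mp (congrFun (congrArg DFunLike.coe hp) x)

lemma le_iff_setOf_eq_one_subset {p f : C(X, ℝ)} {S : Set X} [DecidablePred (· ∈ S)]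
    (hp : IsIdempotentElem p) (hf : ∀ x, f x = if x ∈ S then 1 else 0) :
    p ≤ f ↔ {x | p x = 1} ⊆ S := by
  simp only [ContinuousMap.le_def, hf]
  refine ⟨fun h x hx => ?_, fun h x => ?_⟩
  · by_contra hxS
    have hx1 := h x
    rw [if_neg hxS, (hx : p x = 1)] at hx1
    norm_num at hx1
  · rcases apply_eq_zero_or_eq_one_of_isIdempotentElem hp x with hx | hx
    · rw [hx]; split <;> norm_num
    · rw [hx, if_pos (h hx)]

lemma isOpen_setOf_eq_one_of_isIdempotentElem {p : C(X, ℝ)} (hp : IsIdempotentElem p) :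
    IsOpen {x | p x = 1} := by
  have hset : {x | p x = 1} = p ⁻¹' Set.Ioi (1 / 2) := by
    ext x
    rcases apply_eq_zero_or_eq_one_of_isIdempotentElem hp x with hx | hx <;> norm_num [hx]
  exact hset ▸ isOpen_Ioi.preimage p.continuous

end ContinuousMap

open scoped Classical

theorem stonean_spectral_family_monotone_and_continuous_from_above_general
    {X : Type*} [TopologicalSpace X]
    (a : C(X, ℝ))
    (E : ℝ → C(X, ℝ))
    (hE : ∀ r : ℝ, ∀ x : X,
      E r x = if x ∈ interior {y : X | a y ≤ r} then 1 else 0) :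
    Monotone E ∧
    ∀ r₀ : ℝ,
      (∀ r : ℝ, r₀ < r → E r₀ ≤ E r) ∧
      (∀ p : C(X, ℝ), IsSelfAdjoint p → IsIdempotentElem p →
        (∀ r : ℝ, r₀ < r → p ≤ E r) → p ≤ E r₀) := by
  have hmono : Monotone E := fun r s hrs => ContinuousMap.le_def.mpr fun x => by
    rw [hE, hE]
    by_cases hx : x ∈ interior {y | a y ≤ r}
    · have hxs : x ∈ interior {y | a y ≤ s} :=
        interior_mono (fun y (hy : a y ≤ r) => hy.trans hrs) hx
      rw [if_pos hx, if_pos hxs]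
    · rw [if_neg hx]; split <;> norm_num
  refine ⟨hmono, fun r₀ => ⟨fun r h => hmono h.le, fun p _ hp hpE => ?_⟩⟩
  simp only [ContinuousMap.le_iff_setOf_eq_one_subset hp (hE _)] at hpE ⊢
  have hsub : {x | p x = 1} ⊆ {y | a y ≤ r₀} := fun x hx =>
    le_of_forall_gt_imp_ge_of_dense fun r hr => interior_subset (s := {y | a y ≤ r}) (hpE r hr hx)
  exact interior_maximal hsub (ContinuousMap.isOpen_setOf_eq_one_of_isIdempotentElem hp)

/-- Let `X` be a Stonean space, `a ∈ C(X)` real-valued, and for `r : ℝ` let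
`E_a(r) ∈ C(X)` be the characteristic function of the interior of `{x | a x ≤ r}`.
Then `r ↦ E_a(r)` is monotone increasing, and it is order-continuous from above:
for every `r₀`, the projection `E_a(r₀)` is the infimum, in the projection lattice
of `C(X)`, of the family `{E_a(r) : r > r₀}`. -/
theorem stonean_spectral_family_monotone_and_continuous_from_above
    {X : Type*} [TopologicalSpace X] [CompactSpace X] [T2Space X]
    [ExtremallyDisconnected X]
    (a : C(X, ℝ))
    (E : ℝ → C(X, ℝ))
    (hE : ∀ r : ℝ, ∀ x : X,
      E r x = if x ∈ interior {y : X | a y ≤ r} then 1 else 0) :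
    Monotone E ∧
    ∀ r₀ : ℝ,
      (∀ r : ℝ, r₀ < r → E r₀ ≤ E r) ∧
      (∀ p : C(X, ℝ), IsSelfAdjoint p → IsIdempotentElem p →
        (∀ r : ℝ, r₀ < r → p ≤ E r) → p ≤ E r₀) :=
  stonean_spectral_family_monotone_and_continuous_from_above_general a E hE
end

section
/- Let A be a Type II₁ AW*-factor with canonical (normalized, faithful, completely additive on projections) quasitrace τ, and let M be a MASA of A. For every projection q ∈ M and every real number t ∈ [0, τ(q)], there exists a projection q' ∈ M with q' ≤ q and τ(q') = t. -/
/-!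
Greedy exhaustion. A MASA `M` of a continuous AW*-algebra has no nonzero minimal projections
(for a minimal `e` the corner `eAe` would be `ℂe`), so every nonzero projection of `M` has
nonzero subprojections of arbitrarily small trace. Choose inductively pairwise orthogonal
projections `eₙ ≤ q` of `M` with `τ (e₀ + ⋯ + eₙ) ≤ t`, each at least half as large as any
projection that would still fit. Their supremum `P` lies in `M`, since it commutes with every
symmetry `1 - 2r`, `r` a projection of `M`; and `τ P = ∑ τ eₙ ≤ t` by complete additivity. If
the inequality were strict, a small nonzero subprojection of `q - P` would fit at every stage,
contradicting `τ eₙ → 0`.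
-/

variable {A : Type*} [CStarAlgebra A]

/-- `a` is a projection: a self-adjoint idempotent. -/
def IsProjection (a : A) : Prop := IsSelfAdjoint a ∧ IsIdempotentElem a

/-- The order on projections: `p ≤ q` iff `p * q = p`. -/
def ProjLE (p q : A) : Prop := p * q = p

/-- `p` is the least upper bound of a set `S` of projections, in the projection
order. -/
def IsLUBProj (S : Set A) (p : A) : Prop :=
  IsProjection p ∧ (∀ q ∈ S, ProjLE q p) ∧
    ∀ r : A, IsProjection r → (∀ q ∈ S, ProjLE q r) → ProjLE p r

/-- `M` is a MASA of `A`: a maximal commutative C*-subalgebra. -/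
def IsMasa (M : StarSubalgebra ℂ A) : Prop :=
  IsClosed (M : Set A) ∧ (∀ x ∈ M, ∀ y ∈ M, x * y = y * x) ∧
  ∀ N : StarSubalgebra ℂ A, IsClosed (N : Set A) →
    (∀ x ∈ N, ∀ y ∈ N, x * y = y * x) → M ≤ N → N = M

/-- `A` is an AW*-algebra: every set of pairwise orthogonal projections has a
least upper bound among projections, and every MASA is the norm-closed linear
span of its projections. -/
def IsAWStar (A : Type*) [CStarAlgebra A] : Prop :=
  (∀ S : Set A, (∀ p ∈ S, IsProjection p) →
    (S.Pairwise fun p q => p * q = 0) → ∃ p : A, IsLUBProj S p) ∧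
  (∀ M : StarSubalgebra ℂ A, IsMasa M →
    closure (↑(Submodule.span ℂ {x : A | x ∈ M ∧ IsProjection x}) : Set A)
      = (M : Set A))

/-- `A` is a factor: it has trivial centre. -/
def IsFactor (A : Type*) [CStarAlgebra A] : Prop :=
  ∀ z : A, (∀ a : A, z * a = a * z) → ∃ c : ℂ, z = c • (1 : A)

/-- `A` is finite: `x*x = 1` implies `xx* = 1`. -/
def IsFiniteCStar (A : Type*) [CStarAlgebra A] : Prop :=
  ∀ x : A, star x * x = 1 → x * star x = 1

/-- `A` is continuous: `0` is the only projection `p` with `pAp` abelian. -/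
def IsContinuousCStar (A : Type*) [CStarAlgebra A] : Prop :=
  ∀ p : A, IsProjection p →
    (∀ x y : A, (p * x * p) * (p * y * p) = (p * y * p) * (p * x * p)) → p = 0

/-- `A` is a Type II₁ AW*-factor: an AW*-algebra with trivial centre that is
continuous and finite. -/
def IsTypeII1AWFactor (A : Type*) [CStarAlgebra A] : Prop :=
  IsAWStar A ∧ IsFactor A ∧ IsContinuousCStar A ∧ IsFiniteCStar A

open Finset

lemma isProjection_zero : IsProjection (0 : A) := ⟨.zero _, .zero⟩

lemma IsProjection.star_eq {p : A} (hp : IsProjection p) : star p = p := hp.1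

lemma IsProjection.mul_self {p : A} (hp : IsProjection p) : p * p = p := hp.2

lemma IsProjection.mul_eq_zero_symm {p q : A} (hp : IsProjection p) (hq : IsProjection q)
    (h : p * q = 0) : q * p = 0 := by
  simpa [hp.star_eq, hq.star_eq] using congrArg star h

lemma ProjLE.mul_left_eq_self {p q : A} (hp : IsProjection p) (hq : IsProjection q)
    (h : ProjLE p q) : q * p = p := by
  simpa [hp.star_eq, hq.star_eq] using congrArg star h

lemma ProjLE.trans {p q r : A} (hpq : ProjLE p q) (hqr : ProjLE q r) : ProjLE p r := by
  unfold ProjLE at *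
  rw [← hpq, mul_assoc, hqr]

lemma ProjLE.antisymm {p q : A} (hp : IsProjection p) (hq : IsProjection q)
    (hpq : ProjLE p q) (hqp : ProjLE q p) : p = q :=
  hpq.symm.trans (hqp.mul_left_eq_self hq hp)

lemma ProjLE.mul_eq_zero {p q r : A} (hpq : ProjLE p q) (hqr : q * r = 0) : p * r = 0 := by
  rw [← hpq, mul_assoc, hqr, mul_zero]

lemma IsProjection.add {p q : A} (hp : IsProjection p) (hq : IsProjection q) (h : p * q = 0) :
    IsProjection (p + q) := by
  refine ⟨hp.1.add hq.1, ?_⟩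
  simp only [IsIdempotentElem, add_mul, mul_add, hp.mul_self, hq.mul_self, h,
    hp.mul_eq_zero_symm hq h, add_zero, zero_add]

lemma IsProjection.sub {p q : A} (hp : IsProjection p) (hq : IsProjection q) (h : ProjLE p q) :
    IsProjection (q - p) := by
  refine ⟨hq.1.sub hp.1, ?_⟩
  have h' := h.mul_left_eq_self hp hq
  unfold ProjLE at h
  simp only [IsIdempotentElem, sub_mul, mul_sub, hp.mul_self, hq.mul_self, h, h', sub_self,
    sub_zero]

lemma projLE_add_left {p q : A} (hp : IsProjection p) (h : p * q = 0) : ProjLE p (p + q) := by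
  rw [ProjLE, mul_add, hp.mul_self, h, add_zero]

lemma projLE_sub_self {p q : A} (hq : IsProjection q) (h : ProjLE p q) : ProjLE (q - p) q := by
  rw [ProjLE, sub_mul, hq.mul_self, h]

lemma mul_sub_eq_zero_of_projLE {p q : A} (hp : IsProjection p) (h : ProjLE p q) :
    p * (q - p) = 0 := by
  rw [mul_sub, h, hp.mul_self, sub_self]

lemma IsLUBProj.unique {S : Set A} {P Q : A} (hP : IsLUBProj S P) (hQ : IsLUBProj S Q) :
    P = Q :=
  (hP.2.2 Q hQ.1 hQ.2.1).antisymm hP.1 hQ.1 (hQ.2.2 P hP.1 hP.2.1)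

lemma IsProjection.conj {u p : A} (hu : u ∈ unitary A) (hp : IsProjection p) :
    IsProjection (u * p * star u) := by
  refine ⟨?_, ?_⟩
  · simp only [IsSelfAdjoint, star_mul, star_star, hp.star_eq, mul_assoc]
  · calc u * p * star u * (u * p * star u) = u * (p * (star u * u) * p) * star u := by
          simp only [mul_assoc]
      _ = u * p * star u := by rw [Unitary.star_mul_self_of_mem hu, mul_one, hp.mul_self]

lemma ProjLE.conj {u p q : A} (hu : u ∈ unitary A) (h : ProjLE p q) :
    ProjLE (u * p * star u) (u * q * star u) := by
  calc u * p * star u * (u * q * star u) = u * (p * (star u * u) * q) * star u := by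
        simp only [mul_assoc]
    _ = u * p * star u := by rw [Unitary.star_mul_self_of_mem hu, mul_one, h]

lemma conj_eq_self_of_commute {u s : A} (hu : u ∈ unitary A) (h : Commute u s) :
    u * s * star u = s := by
  rw [h.eq, mul_assoc, Unitary.mul_star_self_of_mem hu, mul_one]

lemma IsLUBProj.commute_of_forall_commute {S : Set A} {P u : A} (hP : IsLUBProj S P)
    (hu : u ∈ unitary A) (hS : ∀ s ∈ S, IsProjection s) (hcomm : ∀ s ∈ S, Commute u s) :
    Commute u P := by
  have hcomm' : ∀ s ∈ S, Commute (star u) s := fun s hs => by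
    simpa [(hS s hs).star_eq] using (hcomm s hs).star_star
  have hconj : IsLUBProj S (u * P * star u) := by
    refine ⟨hP.1.conj hu, fun s hs => ?_, fun r hr hub => ?_⟩
    · simpa [conj_eq_self_of_commute hu (hcomm s hs)] using (hP.2.1 s hs).conj hu
    · have hu' := Unitary.star_mem hu
      have hle : ProjLE P (star u * r * star (star u)) := hP.2.2 _ (hr.conj hu') fun s hs => by
        have := (hub s hs).conj hu'
        rwa [conj_eq_self_of_commute hu' (hcomm' s hs)] at this
      have := hle.conj hu
      rwa [star_star, ← mul_assoc, ← mul_assoc, Unitary.mul_star_self_of_mem hu, one_mul,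
        mul_assoc r, Unitary.mul_star_self_of_mem hu, mul_one] at this
  have := hconj.unique hP
  calc u * P = u * P * star u * u := by
        rw [mul_assoc _ (star u), Unitary.star_mul_self_of_mem hu, mul_one]
    _ = P * u := by rw [this]

def IsGeneratedByProjections (M : StarSubalgebra ℂ A) : Prop :=
  closure (↑(Submodule.span ℂ {x : A | x ∈ M ∧ IsProjection x}) : Set A) = (M : Set A)

lemma IsGeneratedByProjections.mem_of_isClosed {M : StarSubalgebra ℂ A}
    (hgen : IsGeneratedByProjections M) {V : Submodule ℂ A} (hV : IsClosed (V : Set A))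
    (h : ∀ p ∈ M, IsProjection p → p ∈ V) {m : A} (hm : m ∈ M) : m ∈ V := by
  rw [← SetLike.mem_coe, ← hgen] at hm
  exact closure_minimal (Submodule.span_le.2 fun p hp => h p hp.1 hp.2) hV hm

lemma IsMasa.commute {M : StarSubalgebra ℂ A} (hM : IsMasa M) {x y : A} (hx : x ∈ M)
    (hy : y ∈ M) : Commute x y :=
  hM.2.1 x hx y hy

lemma IsMasa.mem_of_forall_commute {M : StarSubalgebra ℂ A} (hM : IsMasa M) {a : A}
    (ha : IsSelfAdjoint a) (hc : ∀ m ∈ M, Commute a m) : a ∈ M := by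
  set s := insert a (M : Set A)
  have hs : ∀ x ∈ s ∪ star s, x ∈ s := by
    rintro x (hx | hx | hx)
    · exact hx
    · exact Or.inl (by rw [← star_star x, hx, ha.star_eq])
    · exact Or.inr (by simpa using star_mem (s := M) hx)
  have hcomm : ∀ x ∈ s, ∀ y ∈ s, x * y = y * x := by
    rintro x (rfl | hx) y (rfl | hy)
    exacts [rfl, hc y hy, (hc x hx).symm, hM.commute hx hy]
  set N := (StarAlgebra.adjoin ℂ s).topologicalClosure
  have hNcomm : ∀ x ∈ N, ∀ y ∈ N, x * y = y * x := fun x hx y hy => by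
    have hN := StarSubalgebra.topologicalClosure_adjoin_le_centralizer_centralizer ℂ s
    replace hx := hN hx
    replace hy := hN hy
    rw [← SetLike.mem_coe, StarSubalgebra.coe_centralizer_centralizer] at hx hy
    exact Set.centralizer_centralizer_comm_of_comm
      (fun x hx y hy => hcomm x (hs x hx) y (hs y hy)) x hx y hy
  have hsN : s ⊆ N := fun x hx =>
    StarSubalgebra.le_topologicalClosure _ (StarAlgebra.subset_adjoin ℂ s hx)
  rw [← hM.2.2 N (StarSubalgebra.isClosed_topologicalClosure _) hNcomm
    fun m hm => hsN (Or.inr hm)]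
  exact hsN (Or.inl rfl)

lemma IsProjection.one_sub_two_smul_mem_unitary {p : A} (hp : IsProjection p) :
    1 - (2 : ℂ) • p ∈ unitary A := by
  have hsq : (1 - (2 : ℂ) • p) * (1 - (2 : ℂ) • p) = 1 := by
    simp only [sub_mul, mul_sub, one_mul, mul_one, smul_mul_smul_comm, hp.mul_self]
    module
  have hstar : star (1 - (2 : ℂ) • p) = 1 - (2 : ℂ) • p := by
    simp [star_sub, hp.star_eq]
  exact Unitary.mem_iff.2 ⟨by rw [hstar, hsq], by rw [hstar, hsq]⟩

lemma IsLUBProj.mem_of_subset {M : StarSubalgebra ℂ A} (hM : IsMasa M)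
    (hgen : IsGeneratedByProjections M) {S : Set A} (hSM : S ⊆ M)
    (hS : ∀ s ∈ S, IsProjection s) {P : A} (hP : IsLUBProj S P) : P ∈ M := by
  refine hM.mem_of_forall_commute hP.1.1 fun m hm => ?_
  have hproj : ∀ r ∈ M, IsProjection r → Commute P r := fun r hr hrp => by
    have hu := (hP.commute_of_forall_commute hrp.one_sub_two_smul_mem_unitary hS fun s hs =>
      ((Commute.one_left s).sub_left ((hM.commute hr (hSM hs)).smul_left _))).symm
    simpa using ((Commute.one_right P).sub_right hu).smul_right (2⁻¹ : ℂ)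
  have hV : IsClosed ((Subalgebra.centralizer ℂ {P}).toSubmodule : Set A) :=
    Set.isClosed_centralizer _
  have := hgen.mem_of_isClosed hV (fun r hr hrp => by
    simpa [Subalgebra.mem_centralizer_iff] using (hproj r hr hrp).eq) hm
  simpa [Subalgebra.mem_centralizer_iff, commute_iff_eq] using this

lemma IsProjection.mul_of_commute {p q : A} (hp : IsProjection p) (hq : IsProjection q)
    (h : Commute p q) : IsProjection (p * q) :=
  ⟨by simp [IsSelfAdjoint, hp.star_eq, hq.star_eq, h.eq], hp.2.mul_of_commute h hq.2⟩

section Minimal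

variable {M : StarSubalgebra ℂ A} {e : A} (hM : IsMasa M) (hgen : IsGeneratedByProjections M)
  (heM : e ∈ M) (he : IsProjection e)
  (hmin : ∀ f ∈ M, IsProjection f → ProjLE f e → f = 0 ∨ f = e)
include hM hgen heM he hmin

lemma corner_mem_span_of_minimal_of_mem {m : A} (hm : m ∈ M) : e * m * e ∈ ℂ ∙ e := by
  let V := (ℂ ∙ e).comap ((LinearMap.mulLeft ℂ e).comp (LinearMap.mulRight ℂ e))
  have hV : IsClosed (V : Set A) := (Submodule.closed_of_finiteDimensional (ℂ ∙ e)).preimage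
    (show Continuous fun x => e * (x * e) by fun_prop)
  suffices hmV : m ∈ V by simpa [V, mul_assoc] using hmV
  refine hgen.mem_of_isClosed hV (fun r hr hrp => ?_) hm
  have her : e * r * e = e * r := by
    rw [mul_assoc, ← (hM.commute heM hr).eq, ← mul_assoc, he.mul_self]
  show e * (r * e) ∈ ℂ ∙ e
  rw [← mul_assoc, her]
  rcases hmin _ (mul_mem heM hr) (he.mul_of_commute hrp (hM.commute heM hr)) her with h | h <;>
    rw [h]
  exacts [zero_mem _, Submodule.mem_span_singleton_self e]

lemma corner_mem_of_minimal {x : A} (hx : IsSelfAdjoint x) : e * x * e ∈ M := by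
  have hsa : IsSelfAdjoint (e * x * e) := by simpa [he.star_eq] using hx.conjugate e
  refine hM.mem_of_forall_commute hsa fun m hm => ?_
  obtain ⟨c, hc⟩ := Submodule.mem_span_singleton.1
    (corner_mem_span_of_minimal_of_mem hM hgen heM he hmin hm)
  have hem : e * m = c • e := by
    rw [hc, mul_assoc, ← (hM.commute heM hm).eq, ← mul_assoc, he.mul_self]
  have hme : m * e = c • e := (hM.commute heM hm).eq ▸ hem
  calc e * x * e * m = c • (e * x * e) := by rw [mul_assoc, hem, mul_smul_comm]
    _ = m * (e * x * e) := by
      rw [← mul_assoc, ← mul_assoc, hme, smul_mul_assoc, smul_mul_assoc]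

lemma corner_mem_span_of_minimal (x : A) : e * x * e ∈ ℂ ∙ e := by
  have hsa {y : A} (hy : IsSelfAdjoint y) : e * y * e ∈ ℂ ∙ e := by
    have := corner_mem_span_of_minimal_of_mem hM hgen heM he hmin
      (corner_mem_of_minimal hM hgen heM he hmin hy)
    rwa [show e * (e * y * e) * e = e * y * e by
      simp [← mul_assoc, he.mul_self, mul_assoc _ e e]] at this
  rw [← realPart_add_I_smul_imaginaryPart x, mul_add, add_mul, mul_smul_comm, smul_mul_assoc]
  exact add_mem (hsa (realPart x).2) (Submodule.smul_mem _ _ (hsa (imaginaryPart x).2))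

lemma eq_zero_of_minimal (hcont : IsContinuousCStar A) : e = 0 := by
  refine hcont e he fun x y => ?_
  obtain ⟨a, ha⟩ := Submodule.mem_span_singleton.1
    (corner_mem_span_of_minimal hM hgen heM he hmin x)
  obtain ⟨b, hb⟩ := Submodule.mem_span_singleton.1
    (corner_mem_span_of_minimal hM hgen heM he hmin y)
  rw [← ha, ← hb, smul_mul_smul_comm, smul_mul_smul_comm, mul_comm a]

end Minimal

lemma mul_sum_eq_zero_of_pairwise {ι : Type*} {e : ι → A}
    (horth : Pairwise fun i j => e i * e j = 0) {s : Finset ι} {a : ι} (ha : a ∉ s) :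
    e a * ∑ i ∈ s, e i = 0 := by
  rw [mul_sum]
  exact sum_eq_zero fun i hi => horth (ne_of_mem_of_not_mem hi ha).symm

lemma IsProjection.sum {ι : Type*} {e : ι → A} (he : ∀ i, IsProjection (e i))
    (horth : Pairwise fun i j => e i * e j = 0) (s : Finset ι) :
    IsProjection (∑ i ∈ s, e i) := by
  classical
  induction s using Finset.induction_on with
  | empty => simpa using isProjection_zero
  | insert a s ha ih =>
    rw [sum_insert ha]
    exact (he a).add ih (mul_sum_eq_zero_of_pairwise horth ha)

def IsCompletelyAdditive (τ : A → ℂ) : Prop :=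
  ∀ (ι : Type) (p : ι → A), (∀ i, IsProjection (p i)) →
    (Pairwise fun i j => p i * p j = 0) →
    ∀ P : A, IsLUBProj (Set.range p) P → HasSum (fun i => τ (p i)) (τ P)

namespace IsCompletelyAdditive

variable {τ : A → ℂ} (hτ : IsCompletelyAdditive τ)
include hτ

lemma map_zero : τ 0 = 0 := by
  have hlub : IsLUBProj (Set.range (Empty.elim : Empty → A)) 0 :=
    ⟨isProjection_zero, by simp, fun r _ _ => zero_mul r⟩
  exact (hτ Empty Empty.elim (fun i => i.elim) (fun i => i.elim) 0 hlub).unique hasSum_empty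

lemma map_add {p q : A} (hp : IsProjection p) (hq : IsProjection q) (h : p * q = 0) :
    τ (p + q) = τ p + τ q := by
  have hqp := hp.mul_eq_zero_symm hq h
  have hlub : IsLUBProj (Set.range ![p, q]) (p + q) := by
    refine ⟨hp.add hq h, ?_, fun r _ hr => ?_⟩
    · simp only [Set.forall_mem_range, Fin.forall_fin_two]
      exact ⟨projLE_add_left hp h, by rw [add_comm]; exact projLE_add_left hq hqp⟩
    · simp only [Set.forall_mem_range, Fin.forall_fin_two] at hr
      rw [ProjLE, add_mul, show p * r = p from hr.1, show q * r = q from hr.2]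
  have := hτ (Fin 2) ![p, q] (by simp [Fin.forall_fin_two, hp, hq])
    (by simp [Pairwise, Fin.forall_fin_two, h, hqp]) _ hlub
  simpa using this.unique (hasSum_fintype _)

lemma map_sum {ι : Type*} {e : ι → A} (he : ∀ i, IsProjection (e i))
    (horth : Pairwise fun i j => e i * e j = 0) (s : Finset ι) :
    τ (∑ i ∈ s, e i) = ∑ i ∈ s, τ (e i) := by
  classical
  induction s using Finset.induction_on with
  | empty => simpa using hτ.map_zero
  | insert a s ha ih =>
    rw [sum_insert ha, sum_insert ha, ← ih]
    exact hτ.map_add (he a) (IsProjection.sum he horth s) (mul_sum_eq_zero_of_pairwise horth ha)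

end IsCompletelyAdditive

section SmallSubprojections

variable {M : StarSubalgebra ℂ A} {τ : A → ℂ} (hM : IsMasa M) (hgen : IsGeneratedByProjections M)
  (hcont : IsContinuousCStar A) (hτ : IsCompletelyAdditive τ)
include hM hgen hcont hτ

lemma exists_subprojection_re_le_half {e : A} (heM : e ∈ M) (he : IsProjection e)
    (hne : e ≠ 0) :
    ∃ f ∈ M, IsProjection f ∧ ProjLE f e ∧ f ≠ 0 ∧ (τ f).re ≤ (τ e).re / 2 := by
  obtain ⟨f, hfM, hf, hfe, hf0, hfe'⟩ : ∃ f ∈ M, IsProjection f ∧ ProjLE f e ∧ f ≠ 0 ∧ f ≠ e := by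
    by_contra! h
    exact hne (eq_zero_of_minimal hM hgen heM he
      (fun f hfM hf hfe => or_iff_not_imp_left.2 (h f hfM hf hfe)) hcont)
  have hsplit : (τ e).re = (τ f).re + (τ (e - f)).re := by
    rw [← Complex.add_re, ← hτ.map_add hf (hf.sub he hfe) (mul_sub_eq_zero_of_projLE hf hfe),
      add_sub_cancel]
  rcases le_total (τ f).re (τ (e - f)).re with h | h
  · exact ⟨f, hfM, hf, hfe, hf0, by linarith⟩
  · exact ⟨e - f, sub_mem heM hfM, hf.sub he hfe, projLE_sub_self he hfe,
      sub_ne_zero.2 (Ne.symm hfe'), by linarith⟩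

lemma exists_subprojection_re_le {e : A} (heM : e ∈ M) (he : IsProjection e) (hne : e ≠ 0)
    {δ : ℝ} (hδ : 0 < δ) : ∃ f ∈ M, IsProjection f ∧ ProjLE f e ∧ f ≠ 0 ∧ (τ f).re ≤ δ := by
  have halving (n : ℕ) :
      ∃ f ∈ M, IsProjection f ∧ ProjLE f e ∧ f ≠ 0 ∧ (τ f).re ≤ (τ e).re / 2 ^ n := by
    induction n with
    | zero => exact ⟨e, heM, he, he.mul_self, hne, by simp⟩
    | succ n ih =>
      obtain ⟨f, hfM, hf, hfe, hf0, hfτ⟩ := ih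
      obtain ⟨g, hgM, hg, hgf, hg0, hgτ⟩ :=
        exists_subprojection_re_le_half hM hgen hcont hτ hfM hf hf0
      refine ⟨g, hgM, hg, hgf.trans hfe, hg0, hgτ.trans ?_⟩
      rw [pow_succ, ← div_div]
      exact div_le_div_of_nonneg_right hfτ zero_le_two
  obtain ⟨n, hn⟩ := pow_unbounded_of_one_lt ((τ e).re / δ) one_lt_two
  obtain ⟨f, hfM, hf, hfe, hf0, hfτ⟩ := halving n
  refine ⟨f, hfM, hf, hfe, hf0, hfτ.trans ?_⟩
  rw [div_le_iff₀ (by positivity)]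
  rw [div_lt_iff₀ hδ] at hn
  linarith

end SmallSubprojections

lemma exists_mem_forall_le_two_mul {S : Set ℝ} (hS : BddAbove S) (h0 : 0 ∈ S) :
    ∃ x ∈ S, ∀ y ∈ S, y ≤ 2 * x := by
  rcases (le_csSup hS h0).lt_or_eq with hpos | hzero
  · obtain ⟨x, hxS, hx⟩ := exists_lt_of_lt_csSup ⟨0, h0⟩ (half_lt_self hpos)
    exact ⟨x, hxS, fun y hy => by linarith [le_csSup hS hy]⟩
  · exact ⟨0, h0, fun y hy => by linarith [le_csSup hS hy]⟩

lemma pairwise_mul_eq_zero_of_mul_sum_range {e : ℕ → A} (he : ∀ n, IsProjection (e n))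
    (h : ∀ n, e n * ∑ i ∈ range n, e i = 0) : Pairwise fun i j => e i * e j = 0 := by
  have hproj (n : ℕ) : IsProjection (∑ i ∈ range n, e i) := by
    induction n with
    | zero => simpa using isProjection_zero
    | succ n ih => rw [sum_range_succ]; exact ih.add (he n) ((he n).mul_eq_zero_symm ih (h n))
  have hle {i j : ℕ} (hij : i < j) : ProjLE (e i) (∑ k ∈ range j, e k) := by
    induction j, hij using Nat.le_induction with
    | base => rw [ProjLE, sum_range_succ, mul_add, h i, (he i).mul_self, zero_add]
    | succ j _ ih =>
      rw [sum_range_succ]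
      exact ih.trans (projLE_add_left (hproj j) ((he j).mul_eq_zero_symm (hproj j) (h j)))
  have hlt {i j : ℕ} (hij : i < j) : e j * e i = 0 := by
    rw [← (hle hij).mul_left_eq_self (he i) (hproj j), ← mul_assoc, h j, zero_mul]
  intro i j hij
  rcases hij.lt_or_gt with hij | hij
  · exact (he j).mul_eq_zero_symm (he i) (hlt hij)
  · exact hlt hij

section Greedy

variable {τ : A → ℂ} {M : StarSubalgebra ℂ A} {q : A} {t : ℝ}

structure FitsAfter (τ : A → ℂ) (M : StarSubalgebra ℂ A) (q : A) (t : ℝ) (c g : A) : Prop where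
  mem : g ∈ M
  isProjection : IsProjection g
  projLE : ProjLE g q
  mul_eq_zero : g * c = 0
  re_add_le : (τ c).re + (τ g).re ≤ t

structure IsGreedyStep (τ : A → ℂ) (M : StarSubalgebra ℂ A) (q : A) (t : ℝ) (c f : A) : Prop where
  fits : FitsAfter τ M q t c f
  le_two_mul : ∀ g, FitsAfter τ M q t c g → (τ g).re ≤ 2 * (τ f).re

lemma exists_isGreedyStep (hτ0 : τ 0 = 0) {c : A} (hc : (τ c).re ≤ t) :
    ∃ f, IsGreedyStep τ M q t c f := by
  have hbdd : BddAbove ((fun g => (τ g).re) '' {g | FitsAfter τ M q t c g}) :=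
    ⟨t - (τ c).re, by rintro _ ⟨g, hg, rfl⟩; linarith [hg.re_add_le]⟩
  have h0 : (0 : ℝ) ∈ (fun g => (τ g).re) '' {g | FitsAfter τ M q t c g} :=
    ⟨0, ⟨zero_mem M, isProjection_zero, zero_mul q, zero_mul c, by simpa [hτ0] using hc⟩,
      by simp [hτ0]⟩
  obtain ⟨_, ⟨f, hf, rfl⟩, hmax⟩ := exists_mem_forall_le_two_mul hbdd h0
  exact ⟨f, hf, fun g hg => hmax _ ⟨g, hg, rfl⟩⟩

lemma exists_greedy_sequence (hτ : IsCompletelyAdditive τ) (ht : 0 ≤ t) :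
    ∃ e : ℕ → A, Pairwise (fun i j => e i * e j = 0) ∧
      ∀ n, IsGreedyStep τ M q t (∑ i ∈ range n, e i) (e n) := by
  let Good := {c : A // IsProjection c ∧ (τ c).re ≤ t}
  choose F hF using fun c : Good => exists_isGreedyStep (M := M) (q := q) hτ.map_zero c.2.2
  have hFc (c : Good) : c.1 * F c = 0 :=
    (hF c).fits.isProjection.mul_eq_zero_symm c.2.1 (hF c).fits.mul_eq_zero
  let next (c : Good) : Good := ⟨c + F c, c.2.1.add (hF c).fits.isProjection (hFc c), by
    rw [hτ.map_add c.2.1 (hF c).fits.isProjection (hFc c), Complex.add_re]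
    exact (hF c).fits.re_add_le⟩
  let c (n : ℕ) : Good := n.rec ⟨0, isProjection_zero, by simpa [hτ.map_zero]⟩ fun _ => next
  have hc (n : ℕ) : (c n).1 = ∑ i ∈ range n, F (c i) := by
    induction n with
    | zero => rfl
    | succ n ih => rw [sum_range_succ, ← ih]
  refine ⟨fun n => F (c n), pairwise_mul_eq_zero_of_mul_sum_range
    (fun n => (hF _).fits.isProjection) fun n => ?_, fun n => ?_⟩
  · rw [← hc]; exact (hF _).fits.mul_eq_zero
  · rw [← hc]; exact hF _

end Greedy

lemma re_pos_of_ne_zero {τ : A → ℂ} (hreal : ∀ p : A, IsProjection p → (τ p).im = 0 ∧ 0 ≤ (τ p).re)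
    (hfaithful : ∀ p : A, IsProjection p → τ p = 0 → p = 0) {p : A} (hp : IsProjection p)
    (hne : p ≠ 0) : 0 < (τ p).re :=
  (hreal p hp).2.lt_of_ne fun h => hne (hfaithful p hp (Complex.ext h.symm (hreal p hp).1))

lemma re_eq_of_isLUBProj_greedy {τ : A → ℂ} {M : StarSubalgebra ℂ A} {q : A} {t : ℝ}
    (hM : IsMasa M) (hgen : IsGeneratedByProjections M) (hcont : IsContinuousCStar A)
    (hτ : IsCompletelyAdditive τ)
    (hreal : ∀ p : A, IsProjection p → (τ p).im = 0 ∧ 0 ≤ (τ p).re)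
    (hfaithful : ∀ p : A, IsProjection p → τ p = 0 → p = 0)
    (hqM : q ∈ M) (hq : IsProjection q) (htq : t ≤ (τ q).re) {e : ℕ → A}
    (horth : Pairwise fun i j => e i * e j = 0)
    (hgreedy : ∀ n, IsGreedyStep τ M q t (∑ i ∈ range n, e i) (e n))
    {P : A} (hP : IsLUBProj (Set.range e) P) (hPM : P ∈ M) (hPq : ProjLE P q) :
    (τ P).re = t := by
  have he (n : ℕ) : IsProjection (e n) := (hgreedy n).fits.isProjection
  have hnn (n : ℕ) : 0 ≤ (τ (e n)).re := (hreal _ (he n)).2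
  have hsum : HasSum (fun n => (τ (e n)).re) (τ P).re := Complex.hasSum_re (hτ ℕ e he horth P hP)
  have hpartial (n : ℕ) : (τ (∑ i ∈ range n, e i)).re = ∑ i ∈ range n, (τ (e i)).re := by
    rw [hτ.map_sum he horth, Complex.re_sum]
  have hle : (τ P).re ≤ t := le_of_tendsto' hsum.tendsto_sum_nat fun n => by
    rw [← hpartial]; linarith [(hgreedy n).fits.re_add_le, hnn n]
  refine le_antisymm hle (le_of_not_gt fun hlt => ?_)
  have hr0 : q - P ≠ 0 := by
    intro h0
    have := hτ.map_add hP.1 (hP.1.sub hq hPq) (mul_sub_eq_zero_of_projLE hP.1 hPq)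
    rw [add_sub_cancel, h0, hτ.map_zero, add_zero] at this
    linarith [congrArg Complex.re this]
  obtain ⟨f, hfM, hf, hfr, hf0, hfτ⟩ := exists_subprojection_re_le hM hgen hcont hτ
    (sub_mem hqM hPM) (hP.1.sub hq hPq) hr0 (sub_pos.2 hlt)
  have hfe (n : ℕ) : f * e n = 0 := hfr.mul_eq_zero <| by
    rw [sub_mul, (hgreedy n).fits.projLE.mul_left_eq_self (he n) hq,
      (hP.2.1 _ ⟨n, rfl⟩).mul_left_eq_self (he n) hP.1, sub_self]
  have hfits (n : ℕ) : FitsAfter τ M q t (∑ i ∈ range n, e i) f := by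
    refine ⟨hfM, hf, hfr.trans (projLE_sub_self hq hPq), by simp [mul_sum, hfe], ?_⟩
    rw [hpartial]
    linarith [sum_le_hasSum (range n) (fun i _ => hnn i) hsum]
  have hlim : Filter.Tendsto (fun n => 2 * (τ (e n)).re) Filter.atTop (nhds 0) := by
    simpa using hsum.summable.tendsto_atTop_zero.const_mul 2
  linarith [ge_of_tendsto' hlim fun n => (hgreedy n).le_two_mul f (hfits n),
    re_pos_of_ne_zero hreal hfaithful hf hf0]

theorem masa_projection_interpolation_of_typeII1_AW_factor_general
    (hA : IsTypeII1AWFactor A)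
    (τ : A → ℂ)
    (hreal : ∀ p : A, IsProjection p → (τ p).im = 0 ∧ 0 ≤ (τ p).re)
    (hfaithful : ∀ p : A, IsProjection p → τ p = 0 → p = 0)
    (hCAP : ∀ (ι : Type) (p : ι → A), (∀ i, IsProjection (p i)) →
      (Pairwise fun i j => p i * p j = 0) →
      ∀ P : A, IsLUBProj (Set.range p) P → HasSum (fun i => τ (p i)) (τ P))
    (M : StarSubalgebra ℂ A) (hM : IsMasa M) :
    ∀ q ∈ M, IsProjection q → ∀ t : ℝ, 0 ≤ t → t ≤ (τ q).re →
      ∃ q' ∈ M, IsProjection q' ∧ ProjLE q' q ∧ τ q' = (t : ℂ) := by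
  intro q hqM hq t ht0 htq
  obtain ⟨⟨hsup, hgen⟩, -, hcont, -⟩ := hA
  obtain ⟨e, horth, hgreedy⟩ := exists_greedy_sequence (M := M) (q := q) hCAP ht0
  have he : ∀ p ∈ Set.range e, IsProjection p :=
    Set.forall_mem_range.2 fun n => (hgreedy n).fits.isProjection
  obtain ⟨P, hP⟩ := hsup (Set.range e) he horth.range_pairwise
  have hPM : P ∈ M :=
    hP.mem_of_subset hM (hgen M hM) (Set.range_subset_iff.2 fun n => (hgreedy n).fits.mem) he
  have hPq : ProjLE P q := hP.2.2 q hq (Set.forall_mem_range.2 fun n => (hgreedy n).fits.projLE)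
  refine ⟨P, hPM, hP.1, hPq, Complex.ext ?_ (hreal P hP.1).1⟩
  exact re_eq_of_isLUBProj_greedy hM (hgen M hM) hcont hCAP hreal hfaithful hqM hq htq horth
    hgreedy hP hPM hPq

/-- **(Corollary on diffuse MASAs.)** Let `A` be a Type II₁ AW*-factor and `τ` its
canonical quasitrace: a normalized tracial map, real-valued nonnegative and
faithful on projections, completely additive on orthogonal families of
projections, and determining Murray–von Neumann equivalence of projections.
Then for every MASA `M` of `A`, every projection `q ∈ M`, and every real
`t ∈ [0, τ(q)]`, there exists a projection `q' ∈ M` with `q' ≤ q` and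
`τ(q') = t`. -/
theorem masa_projection_interpolation_of_typeII1_AW_factor
    (hA : IsTypeII1AWFactor A)
    (τ : A → ℂ)
    (htrace : ∀ x : A, τ (star x * x) = τ (x * star x))
    (hnorm : τ 1 = 1)
    (hreal : ∀ p : A, IsProjection p → (τ p).im = 0 ∧ 0 ≤ (τ p).re)
    (hfaithful : ∀ p : A, IsProjection p → τ p = 0 → p = 0)
    (hCAP : ∀ (ι : Type) (p : ι → A), (∀ i, IsProjection (p i)) →
      (Pairwise fun i j => p i * p j = 0) →
      ∀ P : A, IsLUBProj (Set.range p) P → HasSum (fun i => τ (p i)) (τ P))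
    (hequiv : ∀ p q : A, IsProjection p → IsProjection q →
      ((∃ u : A, p = u * star u ∧ q = star u * u) ↔ τ p = τ q))
    (M : StarSubalgebra ℂ A) (hM : IsMasa M) :
    ∀ q ∈ M, IsProjection q → ∀ t : ℝ, 0 ≤ t → t ≤ (τ q).re →
      ∃ q' ∈ M, IsProjection q' ∧ ProjLE q' q ∧ τ q' = (t : ℂ) :=
  masa_projection_interpolation_of_typeII1_AW_factor_general hA τ hreal hfaithful hCAP M hM
end

section
/- Let A be a unital C*-algebra and suppose there exists a positive linear map E : A** → A from the bidual (equipped with its von Neumann algebra structure) onto A that fixes A pointwise. Then A is monotone complete: every norm-bounded monotone increasing net in the self-adjoint part A_sa has a least upper bound in A_sa. -/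
/-!
Fix an ultrafilter `U` finer than `atTop`. By Banach–Alaoglu the bounded net `x`, viewed in
`A**`, converges weak-* along `U` to some `Y`; passing to `U` avoids showing that the net itself
converges. Positive functionals are monotone, so on them `x j ≤ Y ≤ z` for every index `j` and
every upper bound `z`; the positive retraction `E` turns this into `x j ≤ E Y ≤ z`.
-/

open NormedSpace

variable {A : Type*} [CStarAlgebra A] [PartialOrder A] [StarOrderedRing A]

/-- A functional `φ ∈ A*` is positive if it takes nonnegative real values on
positive elements. -/
def IsPositiveFunctional (φ : StrongDual ℂ A) : Prop :=
  ∀ a : A, 0 ≤ a → φ a = ((φ a).re : ℂ) ∧ 0 ≤ (φ a).re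

/-- An element `x ∈ A**` of the bidual is positive if it takes nonnegative real
values on positive functionals. -/
def IsPositiveInBidual (x : StrongDual ℂ (StrongDual ℂ A)) : Prop :=
  ∀ φ : StrongDual ℂ A, IsPositiveFunctional φ → x φ = (((x φ).re : ℝ) : ℂ) ∧ 0 ≤ (x φ).re

open Filter Topology
open scoped ComplexOrder

theorem Complex.nonneg_iff_eq_ofReal_re {w : ℂ} : 0 ≤ w ↔ w = (w.re : ℂ) ∧ 0 ≤ w.re := by
  rw [Complex.nonneg_iff, Complex.ext_iff]
  simp [eq_comm, and_comm]

theorem exists_forall_tendsto_ultrafilter_of_norm_le {𝕜 E ι : Type*} [RCLike 𝕜]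
    [NormedAddCommGroup E] [NormedSpace 𝕜 E] (U : Ultrafilter ι) {f : ι → E} {C : ℝ}
    (hf : ∀ i, ‖f i‖ ≤ C) :
    ∃ Y : StrongDual 𝕜 (StrongDual 𝕜 E), ∀ φ, Tendsto (fun i ↦ φ (f i)) U (𝓝 (Y φ)) := by
  let g : ι → WeakDual 𝕜 (StrongDual 𝕜 E) := fun i ↦ inclusionInDoubleDual 𝕜 E (f i)
  have hg : ∀ i, g i ∈ WeakDual.toStrongDual ⁻¹' Metric.closedBall 0 C := fun i ↦
    (mem_closedBall_zero_iff (E := StrongDual 𝕜 (StrongDual 𝕜 E))).mpr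
      ((double_dual_bound 𝕜 E (f i)).trans (hf i))
  obtain ⟨Y, -, hY⟩ := (WeakDual.isCompact_closedBall 0 C).ultrafilter_le_nhds (U.map g)
    (le_principal_iff.mpr (mem_map.mpr (univ_mem' hg)))
  exact ⟨Y, fun φ ↦ ((WeakDual.eval_continuous φ).tendsto Y).comp hY⟩

theorem IsPositiveFunctional.monotone {φ : StrongDual ℂ A} (hφ : IsPositiveFunctional φ) :
    Monotone φ := fun a b hab ↦ by
  simpa only [map_sub, sub_nonneg] using
    Complex.nonneg_iff_eq_ofReal_re.mpr (hφ (b - a) (sub_nonneg.mpr hab))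

omit [StarOrderedRing A] in
theorem isPositiveInBidual_sub_of_forall_le {X Y : StrongDual ℂ (StrongDual ℂ A)}
    (h : ∀ φ, IsPositiveFunctional φ → Y φ ≤ X φ) : IsPositiveInBidual (X - Y) := fun φ hφ ↦
  Complex.nonneg_iff_eq_ofReal_re.mp (by simpa only [sub_apply, sub_nonneg] using h φ hφ)

theorem LinearMap.map_le_map_of_forall_isPositiveFunctional
    {E : StrongDual ℂ (StrongDual ℂ A) →ₗ[ℂ] A} (hpos : ∀ x, IsPositiveInBidual x → 0 ≤ E x)
    {X Y : StrongDual ℂ (StrongDual ℂ A)} (h : ∀ φ, IsPositiveFunctional φ → Y φ ≤ X φ) :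
    E Y ≤ E X := by
  have hXY := hpos _ (isPositiveInBidual_sub_of_forall_le h)
  rwa [map_sub E, sub_nonneg] at hXY

/-- If a unital C*-algebra `A` is a retract of its bidual — i.e. there is a
positive linear map `E : A** → A` fixing `A` pointwise — then `A` is monotone
complete: every norm-bounded monotone increasing net of self-adjoint elements
has a least upper bound among the self-adjoint elements. -/
theorem monotoneComplete_of_bidual_retract
    (E : StrongDual ℂ (StrongDual ℂ A) →ₗ[ℂ] A)
    (hpos : ∀ x : StrongDual ℂ (StrongDual ℂ A), IsPositiveInBidual x → 0 ≤ E x)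
    (hfix : ∀ a : A, E (inclusionInDoubleDual ℂ A a) = a) :
    ∀ (ι : Type) (_ : Preorder ι), ∀ (x : ι → A),
      (∀ i j : ι, i ≤ j → x i ≤ x j) →
      (∀ i j : ι, ∃ k, i ≤ k ∧ j ≤ k) → Nonempty ι →
      (∀ i, IsSelfAdjoint (x i)) →
      (∃ C : ℝ, ∀ i, ‖x i‖ ≤ C) →
      ∃ y : A, IsSelfAdjoint y ∧ (∀ i, x i ≤ y) ∧
        ∀ z : A, IsSelfAdjoint z → (∀ i, x i ≤ z) → y ≤ z := by
  intro ι _ x hmono hdir hne hsa ⟨C, hC⟩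
  have : IsDirected ι (· ≤ ·) := ⟨hdir⟩
  let U : Ultrafilter ι := .of atTop
  obtain ⟨Y, hY⟩ := exists_forall_tendsto_ultrafilter_of_norm_le (𝕜 := ℂ) U hC
  have upper (j : ι) : x j ≤ E Y := by
    have hUj : ∀ᶠ i in U, j ≤ i := Ultrafilter.of_le _ (eventually_ge_atTop j)
    simpa only [hfix] using E.map_le_map_of_forall_isPositiveFunctional hpos
      (Y := inclusionInDoubleDual ℂ A (x j)) fun φ hφ ↦
        ge_of_tendsto (hY φ) (hUj.mono fun i hi ↦ hφ.monotone (hmono j i hi))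
  have least (z : A) (hz : ∀ i, x i ≤ z) : E Y ≤ z := by
    simpa only [hfix] using E.map_le_map_of_forall_isPositiveFunctional hpos
      (X := inclusionInDoubleDual ℂ A z) fun φ hφ ↦
        le_of_tendsto' (hY φ) fun i ↦ hφ.monotone (hz i)
  obtain ⟨i₀⟩ := hne
  exact ⟨E Y, (hsa i₀).of_ge (upper i₀), upper, fun z _ ↦ least z⟩
end

section
/- Let A be a unital C*-algebra of real rank zero (self-adjoint elements with finite spectrum are dense in A_sa), and let ρ, Φ : A → ℂ be two continuous functions that are both linear on every commutative C*-subalgebra, satisfy ρ(a+ib)=ρ(a)+iρ(b) and Φ(a+ib)=Φ(a)+iΦ(b) for self-adjoint a,b, and agree on all projections of A. Then ρ = Φ. -/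
/-!
A self-adjoint element `a` with finite spectrum is the finite sum `∑ μ • p_μ` of its spectral
projections `p_μ`, all of which lie in the commutative C*-algebra generated by `a`. A functional
that is linear on commutative C*-subalgebras therefore takes the value `∑ μ * ψ p_μ` at `a`, so two
such functionals agreeing on projections agree at `a`. Real rank zero and continuity extend the
agreement to all self-adjoint elements, and `ψ (a + i b) = ψ a + i ψ b` to all of `A`.
-/

open ComplexStarModule StarAlgebra

theorem map_sum_smul_of_linear_on_submodule {𝕜 M ι : Type*} [Semiring 𝕜] [AddCommMonoid M]
    [Module 𝕜 M] {ψ : M → 𝕜} {S : Submodule 𝕜 M}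
    (hadd : ∀ x ∈ S, ∀ y ∈ S, ψ (x + y) = ψ x + ψ y)
    (hsmul : ∀ (c : 𝕜), ∀ x ∈ S, ψ (c • x) = c * ψ x)
    (t : Finset ι) (c : ι → 𝕜) (g : ι → M) (hg : ∀ i ∈ t, g i ∈ S) :
    ψ (∑ i ∈ t, c i • g i) = ∑ i ∈ t, c i * ψ (g i) := by
  induction t using Finset.cons_induction with
  | empty => simpa using hsmul 0 0 S.zero_mem
  | cons i t hit ih =>
    simp only [Finset.forall_mem_cons] at hg
    rw [Finset.sum_cons, Finset.sum_cons, hadd _ (S.smul_mem _ hg.1) _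
      (S.sum_mem fun j hj => S.smul_mem _ (hg.2 j hj)), hsmul _ _ hg.1, ih hg.2]

theorem StarAlgebra.mul_comm_of_mem_elemental {A : Type*} [CStarAlgebra A] (a : A)
    [IsStarNormal a] : ∀ x ∈ elemental ℂ a, ∀ y ∈ elemental ℂ a, x * y = y * x :=
  fun x hx y hy => congrArg Subtype.val (mul_comm (⟨x, hx⟩ : elemental ℂ a) ⟨y, hy⟩)

section SpectralProjection

variable {A : Type*} [CStarAlgebra A]

/-- This is the junk value `0` unless the indicator of `{μ}` is continuous on the spectrum of `a`
(e.g. when the spectrum is finite). -/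
noncomputable def spectralProjection (a : A) (μ : ℂ) : A :=
  cfc (fun z : ℂ => if z = μ then 1 else 0) a

theorem isStarProjection_spectralProjection {a : A} (ha : (spectrum ℂ a).Finite) (μ : ℂ) :
    IsStarProjection (spectralProjection a μ) where
  isIdempotentElem := by
    rw [IsIdempotentElem, spectralProjection,
      ← cfc_mul _ _ a (ha.continuousOn _) (ha.continuousOn _)]
    congr 1 with z
    split_ifs <;> simp
  isSelfAdjoint := by
    rw [IsSelfAdjoint, spectralProjection, ← cfc_star]
    congr 1 with z
    split_ifs <;> simp

theorem eq_sum_smul_spectralProjection (a : A) [IsStarNormal a] (ha : (spectrum ℂ a).Finite) :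
    a = ∑ μ ∈ ha.toFinset, μ • spectralProjection a μ := by
  have hid : (spectrum ℂ a).EqOn id
      (∑ μ ∈ ha.toFinset, fun z : ℂ => μ • if z = μ then (1 : ℂ) else 0) := by
    intro z hz
    simp [Finset.sum_apply, ha.mem_toFinset.mpr hz]
  conv_lhs => rw [← cfc_id ℂ a, cfc_congr hid, cfc_sum _ a _ fun μ _ => ha.continuousOn _]
  exact Finset.sum_congr rfl fun μ _ => cfc_smul μ _ a (ha.continuousOn _)

theorem apply_eq_sum_mul_apply_spectralProjection {ψ : A → ℂ} (a : A) [IsStarNormal a]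
    (ha : (spectrum ℂ a).Finite)
    (hadd : ∀ x ∈ elemental ℂ a, ∀ y ∈ elemental ℂ a, ψ (x + y) = ψ x + ψ y)
    (hsmul : ∀ (c : ℂ), ∀ x ∈ elemental ℂ a, ψ (c • x) = c * ψ x) :
    ψ a = ∑ μ ∈ ha.toFinset, μ * ψ (spectralProjection a μ) := by
  conv_lhs => rw [eq_sum_smul_spectralProjection a ha]
  exact map_sum_smul_of_linear_on_submodule (S := (elemental ℂ a).toSubalgebra.toSubmodule)
    hadd hsmul _ _ _ fun μ _ => cfc_mem_elemental _ a

end SpectralProjection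

/-- Let `A` be a unital C*-algebra of real rank zero (self-adjoint elements of
finite spectrum are dense in the self-adjoint part).  If `ρ, Φ : A → ℂ` are
norm-continuous quasilinear functionals (linear on every commutative
C*-subalgebra, and satisfying `ρ(a+ib) = ρ(a)+iρ(b)` for self-adjoint `a, b`)
that agree on all projections of `A`, then `ρ = Φ`. -/
theorem quasilinear_eq_of_agree_on_projections
    {A : Type*} [CStarAlgebra A]
    (hrr0 : closure {a : A | IsSelfAdjoint a ∧ (spectrum ℂ a).Finite}
      = {a : A | IsSelfAdjoint a})
    (ρ Φ : A → ℂ)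
    (hρcont : Continuous ρ) (hΦcont : Continuous Φ)
    (hρlin : ∀ B : StarSubalgebra ℂ A, (∀ x ∈ B, ∀ y ∈ B, x * y = y * x) →
      (∀ x ∈ B, ∀ y ∈ B, ρ (x + y) = ρ x + ρ y) ∧
      (∀ (c : ℂ), ∀ x ∈ B, ρ (c • x) = c * ρ x))
    (hΦlin : ∀ B : StarSubalgebra ℂ A, (∀ x ∈ B, ∀ y ∈ B, x * y = y * x) →
      (∀ x ∈ B, ∀ y ∈ B, Φ (x + y) = Φ x + Φ y) ∧
      (∀ (c : ℂ), ∀ x ∈ B, Φ (c • x) = c * Φ x))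
    (hρI : ∀ a b : A, IsSelfAdjoint a → IsSelfAdjoint b →
      ρ (a + Complex.I • b) = ρ a + Complex.I * ρ b)
    (hΦI : ∀ a b : A, IsSelfAdjoint a → IsSelfAdjoint b →
      Φ (a + Complex.I • b) = Φ a + Complex.I * Φ b)
    (hproj : ∀ p : A, IsSelfAdjoint p → IsIdempotentElem p → ρ p = Φ p) :
    ρ = Φ := by
  have agree_of_finite_spectrum :
      Set.EqOn ρ Φ {a : A | IsSelfAdjoint a ∧ (spectrum ℂ a).Finite} := by
    rintro a ⟨ha, hfin⟩
    have := ha.isStarNormal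
    obtain ⟨hρadd, hρsmul⟩ := hρlin _ (mul_comm_of_mem_elemental a)
    obtain ⟨hΦadd, hΦsmul⟩ := hΦlin _ (mul_comm_of_mem_elemental a)
    rw [apply_eq_sum_mul_apply_spectralProjection a hfin hρadd hρsmul,
      apply_eq_sum_mul_apply_spectralProjection a hfin hΦadd hΦsmul]
    refine Finset.sum_congr rfl fun μ _ => ?_
    have hp := isStarProjection_spectralProjection hfin μ
    rw [hproj _ hp.isSelfAdjoint hp.isIdempotentElem]
  have agree_of_isSelfAdjoint : Set.EqOn ρ Φ {a : A | IsSelfAdjoint a} :=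
    hrr0 ▸ agree_of_finite_spectrum.closure hρcont hΦcont
  funext x
  rw [← realPart_add_I_smul_imaginaryPart x, hρI _ _ (ℜ x).2 (ℑ x).2, hΦI _ _ (ℜ x).2 (ℑ x).2,
    agree_of_isSelfAdjoint (ℜ x).2, agree_of_isSelfAdjoint (ℑ x).2]
end
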